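/- arXiv:2109.04024 — 4 statements merged into one kernel-verified Lean document; each statement's English description precedes it below -/
import Mathlib

section
/- Let X and U be finite nonempty sets, K a positive integer, N_1,...,N_K positive integers with N_pop = Σ_k N_k, and M_R, L_R ≥ 0. Fix states x_{j,k} ∈ X for j ∈ [N_k], k ∈ [K], and let μ^N ∈ P(X×[K]) be their empirical distribution, μ^N(x,k) = (1/N_pop)·Σ_{j=1}^{N_k} 1{x_{j,k} = x}. Let π = (π_k)_{k∈[K]} be decision rules π_k : X × P(X×[K]) → P(U), and let (u_{j,k})_{j,k} be mutually independent U-valued random variables with u_{j,k} distributed according to π_k(x_{j,k}, μ^N). Let ν^N ∈ P(U×[K]) be the random empirical action distribution ν^N(u,k) = (1/N_pop)·Σ_{j=1}^{N_k} 1{u_{j,k} = u}. Let r_k : X × U × P(X×[K]) × P(U×[K]) → ℝ satisfy |r_k(x,u,μ,ν)| ≤ M_R and |r_k(x,u,μ,ν₁) − r_k(x,u,μ,ν₂)| ≤ L_R·|ν₁ − ν₂|₁ for all arguments. Define ν^MF(μ^N,π)(u,k) = Σ_{x∈X} π_k(x,μ^N)(u)·μ^N(x,k) and r_k^MF(μ^N,π)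 = Σ_{x,u} μ^N(x,k)·π_k(x,μ^N)(u)·r_k(x,u,μ^N,ν^MF(μ^N,π)). Then E| (1/N_pop)·Σ_{k∈[K]} Σ_{j=1}^{N_k} r_k(x_{j,k}, u_{j,k}, μ^N, ν^N) − Σ_{k∈[K]} r_k^MF(μ^N,π) | ≤ (M_R + L_R)·√|U|·(1/N_pop)·Σ_{k∈[K]} √N_k. -/
open MeasureTheory ProbabilityTheory Finset

/-- A probability distribution on a finite type, represented as a nonnegative
function summing to one. -/
def IsProb {A : Type*} [Fintype A] (μ : A → ℝ) : Prop :=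
  (∀ a, 0 ≤ μ a) ∧ ∑ a, μ a = 1

/-- The L1 distance between two real-valued functions on a finite type. -/
noncomputable def l1 {A : Type*} [Fintype A] (μ ν : A → ℝ) : ℝ :=
  ∑ a, |μ a - ν a|

/-!
Replacing the empirical action distribution `ν^N` by its mean `ν^MF` (the population average of
the laws of the actions) costs at most `L_R |ν^N - ν^MF|₁`; what remains is, for each `k`, the
centred sum of the independent rewards `r_k(x_{j,k}, u_{j,k}, μ^N, ν^MF)`. Both pieces are
controlled by `E|S - E S| ≤ √Var S` for a sum `S` of independent variables. For the rewards
`Var S ≤ N_k M_R²`. The distance `|ν^N - ν^MF|₁` is `1/N_pop` times a sum over `(u, k)` of centred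
sums of indicators, with variances at most `Σ_j π_k(x_{j,k}, μ^N)(u)`, and Cauchy–Schwarz over
`u` turns the sum of their square roots into `√|U| √N_k`.
-/

section Population

variable {κ A : Type*} {N : κ → ℕ} {Npop : ℝ}

def pointMass [DecidableEq A] (a : A) : A → ℝ := fun b => if a = b then 1 else 0

/-- With `w k j = pointMass (y k j)` this is the empirical distribution of `y`, as `μ^N` and
`ν^N`; with `w k j` the law of the action `u_{j,k}` it is `ν^MF`. -/
noncomputable def popAverage (Npop : ℝ) (w : (k : κ) → Fin (N k) → A → ℝ) : A × κ → ℝ :=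
  fun q => (∑ j, w q.2 j q.1) / Npop

@[simp]
theorem popAverage_apply (w : (k : κ) → Fin (N k) → A → ℝ) (a : A) (k : κ) :
    popAverage Npop w (a, k) = (∑ j, w k j a) / Npop :=
  rfl

variable [Fintype A]

theorem isProb_pointMass [DecidableEq A] (a : A) : IsProb (pointMass a) :=
  ⟨fun b => by unfold pointMass; split_ifs <;> norm_num, by simp [pointMass]⟩

theorem sum_mul_popAverage_pointMass [DecidableEq A] (y : (k : κ) → Fin (N k) → A)
    (φ : A → ℝ) (k : κ) :
    ∑ a, φ a * popAverage Npop (fun k j => pointMass (y k j)) (a, k) = (∑ j, φ (y k j)) / Npop := by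
  simp only [popAverage_apply, pointMass, mul_div_assoc', ← sum_div, mul_sum, mul_ite, mul_one,
    mul_zero]
  rw [Finset.sum_comm]
  simp

variable [Fintype κ]

theorem isProb_popAverage (hNpop : Npop = ∑ k, (N k : ℝ)) (hpos : 0 < Npop)
    {w : (k : κ) → Fin (N k) → A → ℝ} (hw : ∀ k j, IsProb (w k j)) :
    IsProb (popAverage Npop w) := by
  have hrow : ∀ k, ∑ a, ∑ j, w k j a = N k := fun k => by
    rw [Finset.sum_comm]
    simp [(hw k _).2]
  refine ⟨fun q => div_nonneg (sum_nonneg fun j _ => (hw _ j).1 _) hpos.le, ?_⟩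
  simp only [Fintype.sum_prod_type_right, popAverage_apply, ← sum_div, hrow, ← hNpop]
  exact div_self hpos.ne'

theorem l1_popAverage (hpos : 0 ≤ Npop) (w w' : (k : κ) → Fin (N k) → A → ℝ) :
    l1 (popAverage Npop w) (popAverage Npop w')
      = (∑ k, ∑ a, |∑ j, (w k j a - w' k j a)|) / Npop := by
  simp only [l1, Fintype.sum_prod_type_right, popAverage_apply, ← sub_div, abs_div,
    abs_of_nonneg hpos, ← sum_div, sum_sub_distrib]

theorem abs_meanField_error_le [DecidableEq A] (hNpop : Npop = ∑ k, (N k : ℝ)) (hpos : 0 < Npop)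
    {w : (k : κ) → Fin (N k) → A → ℝ} (hw : ∀ k j, IsProb (w k j)) {L : ℝ}
    {f : (k : κ) → Fin (N k) → A → (A × κ → ℝ) → ℝ}
    (hfLip : ∀ k j a ν₁ ν₂, IsProb ν₁ → IsProb ν₂ → |f k j a ν₁ - f k j a ν₂| ≤ L * l1 ν₁ ν₂)
    (c : (k : κ) → Fin (N k) → A) :
    |(1 / Npop) * ∑ k, ∑ j, f k j (c k j) (popAverage Npop fun k j => pointMass (c k j))
        - ∑ k, (∑ j, ∑ a, w k j a * f k j a (popAverage Npop w)) / Npop|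
      ≤ (∑ k, (L * ∑ a, |∑ j, (pointMass (c k j) a - w k j a)|
          + |∑ j, (f k j (c k j) (popAverage Npop w)
              - ∑ a, w k j a * f k j a (popAverage Npop w))|)) / Npop := by
  set νemp := popAverage Npop fun k j => pointMass (c k j)
  set νmf := popAverage Npop w
  have hνemp : IsProb νemp := isProb_popAverage hNpop hpos fun k j => isProb_pointMass (c k j)
  have hνmf : IsProb νmf := isProb_popAverage hNpop hpos hw
  have hsplit : (1 / Npop) * ∑ k, ∑ j, f k j (c k j) νemp
        - ∑ k, (∑ j, ∑ a, w k j a * f k j a νmf) / Npop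
      = (∑ k, ∑ j, (f k j (c k j) νemp - f k j (c k j) νmf)
          + ∑ k, ∑ j, (f k j (c k j) νmf - ∑ a, w k j a * f k j a νmf)) / Npop := by
    simp only [sum_sub_distrib, ← sum_div]
    ring
  have hlip : |∑ k, ∑ j, (f k j (c k j) νemp - f k j (c k j) νmf)|
      ≤ L * ∑ k, ∑ a, |∑ j, (pointMass (c k j) a - w k j a)| :=
    calc _ ≤ ∑ k, ∑ j : Fin (N k), L * l1 νemp νmf :=
          (abs_sum_le_sum_abs _ _).trans <| sum_le_sum fun k _ =>
            (abs_sum_le_sum_abs _ _).trans <| sum_le_sum fun j _ => hfLip _ _ _ _ _ hνemp hνmf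
      _ = L * ∑ k, ∑ a, |∑ j, (pointMass (c k j) a - w k j a)| := by
          simp only [sum_const, card_univ, Fintype.card_fin, nsmul_eq_mul, ← sum_mul, ← hNpop,
            νemp, νmf, l1_popAverage hpos.le]
          field_simp
  rw [hsplit, abs_div, abs_of_pos hpos, sum_add_distrib, ← mul_sum]
  gcongr
  exact (abs_add_le _ _).trans (add_le_add hlip (abs_sum_le_sum_abs _ _))

end Population

section Concentration

variable {Ω : Type*} [MeasurableSpace Ω] {P : Measure Ω} [IsProbabilityMeasure P]

theorem integral_abs_sub_integral_le_sqrt_variance {Z : Ω → ℝ} (hZ : MemLp Z 2 P) :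
    ∫ ω, |Z ω - P[Z]| ∂P ≤ √(Var[Z; P]) := by
  have hW : MemLp (fun ω => Z ω - P[Z]) 2 P := hZ.sub (memLp_const _)
  have hvar := variance_nonneg |fun ω => Z ω - P[Z]| P
  rw [variance_eq_sub hW.abs] at hvar
  refine (le_abs_self _).trans (Real.abs_le_sqrt ?_)
  rw [variance_eq_integral hZ.aemeasurable]
  simpa [sq_abs] using hvar

theorem integral_abs_sum_sub_integral_le_sqrt_sum_variance {ι : Type*} {X : ι → Ω → ℝ}
    {s : Finset ι} (hX : ∀ i ∈ s, MemLp (X i) 2 P)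
    (hindep : Set.Pairwise ↑s fun i j => X i ⟂ᵢ[P] X j) :
    ∫ ω, |∑ i ∈ s, (X i ω - P[X i])| ∂P ≤ √(∑ i ∈ s, Var[X i; P]) := by
  have hsum : ∀ ω, ∑ i ∈ s, (X i ω - P[X i]) = (∑ i ∈ s, X i) ω - P[∑ i ∈ s, X i] := by
    intro ω
    simp only [Finset.sum_apply]
    rw [integral_finsetSum s fun i hi => (hX i hi).integrable one_le_two, sum_sub_distrib]
  simp_rw [hsum, ← IndepFun.variance_sum hX hindep]
  exact integral_abs_sub_integral_le_sqrt_variance (memLp_finsetSum' s hX)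

noncomputable def law {U : Type*} [MeasurableSpace U] (P : Measure Ω) (v : Ω → U) : U → ℝ :=
  fun a => P.real (v ⁻¹' {a})

variable {U : Type*} [Fintype U] [MeasurableSpace U] [MeasurableSingletonClass U]

theorem integral_comp_eq_sum_law {v : Ω → U} (hv : Measurable v) (h : U → ℝ) :
    ∫ ω, h (v ω) ∂P = ∑ a, law P v a * h a := by
  rw [← integral_map hv.aemeasurable (by fun_prop), integral_fintype .of_finite]
  simp [law, map_measureReal_apply hv (measurableSet_singleton _)]

theorem isProb_law {v : Ω → U} (hv : Measurable v) : IsProb (law P v) := by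
  refine ⟨fun a => measureReal_nonneg, ?_⟩
  simp only [law]
  rw [sum_measureReal_preimage_singleton _ fun a _ => hv (measurableSet_singleton a)]
  simp

theorem integral_abs_sum_comp_sub_le {ι : Type*} {v : ι → Ω → U} (hv : ∀ i, Measurable (v i))
    {s : Finset ι} (hindep : Set.Pairwise ↑s fun i j => v i ⟂ᵢ[P] v j) (h : ι → U → ℝ) :
    ∫ ω, |∑ i ∈ s, (h i (v i ω) - ∑ a, law P (v i) a * h i a)| ∂P
      ≤ √(∑ i ∈ s, ∑ a, law P (v i) a * h i a ^ 2) := by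
  have hmean : ∀ i, ∑ a, law P (v i) a * h i a = P[fun ω => h i (v i ω)] :=
    fun i => (integral_comp_eq_sum_law (hv i) (h i)).symm
  simp_rw [hmean]
  refine (integral_abs_sum_sub_integral_le_sqrt_sum_variance
    (fun i _ => MemLp.of_discrete.comp_of_map (hv i).aemeasurable)
    (fun i hi j hj hij => (hindep hi hj hij).comp (measurable_of_finite (h i))
      (measurable_of_finite (h j)))).trans (Real.sqrt_le_sqrt (sum_le_sum fun i _ => ?_))
  refine (variance_le_expectation_sq
    ((measurable_of_finite (h i)).comp (hv i)).aestronglyMeasurable).trans_eq ?_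
  exact integral_comp_eq_sum_law (P := P) (hv i) fun a => h i a ^ 2

theorem sum_integral_abs_sum_pointMass_sub_le [DecidableEq U] {ι : Type*} {v : ι → Ω → U}
    (hv : ∀ i, Measurable (v i)) {s : Finset ι}
    (hindep : Set.Pairwise ↑s fun i j => v i ⟂ᵢ[P] v j) :
    ∑ a, ∫ ω, |∑ i ∈ s, (pointMass (v i ω) a - law P (v i) a)| ∂P
      ≤ √(Fintype.card U) * √(#s) := by
  have hsel : ∀ i a, ∑ b, law P (v i) b * pointMass b a = law P (v i) a := by
    simp [pointMass]
  have hsel_sq : ∀ i a, ∑ b, law P (v i) b * pointMass b a ^ 2 = law P (v i) a := by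
    simp [pointMass]
  have hmass : ∑ a, ∑ i ∈ s, law P (v i) a = #s := by
    rw [Finset.sum_comm]
    simp [(isProb_law (hv _)).2]
  calc _ ≤ ∑ a, √1 * √(∑ i ∈ s, law P (v i) a) := sum_le_sum fun a _ => by
        have := integral_abs_sum_comp_sub_le (P := P) hv hindep fun _ b => pointMass b a
        simpa only [hsel, hsel_sq, Real.sqrt_one, one_mul] using this
    _ ≤ √(∑ _a : U, 1) * √(∑ a, ∑ i ∈ s, law P (v i) a) :=
        Real.sum_sqrt_mul_sqrt_le _ (fun _ => zero_le_one)
          fun a => sum_nonneg fun i _ => (isProb_law (hv i)).1 a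
    _ = √(Fintype.card U) * √(#s) := by simp [hmass]

theorem integral_abs_sum_comp_sub_le_of_abs_le {ι : Type*} {v : ι → Ω → U}
    (hv : ∀ i, Measurable (v i)) {s : Finset ι}
    (hindep : Set.Pairwise ↑s fun i j => v i ⟂ᵢ[P] v j) {M : ℝ} (hM : 0 ≤ M) {h : ι → U → ℝ}
    (hh : ∀ i a, |h i a| ≤ M) :
    ∫ ω, |∑ i ∈ s, (h i (v i ω) - ∑ a, law P (v i) a * h i a)| ∂P ≤ M * √(#s) := by
  have hsecond : ∀ i, ∑ a, law P (v i) a * h i a ^ 2 ≤ M ^ 2 := fun i =>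
    calc _ ≤ ∑ a, law P (v i) a * M ^ 2 := sum_le_sum fun a _ =>
          mul_le_mul_of_nonneg_left (sq_le_sq' (abs_le.1 (hh i a)).1 (abs_le.1 (hh i a)).2)
            ((isProb_law (hv i)).1 a)
      _ = M ^ 2 := by rw [← sum_mul, (isProb_law (hv i)).2, one_mul]
  calc _ ≤ √(∑ i ∈ s, ∑ a, law P (v i) a * h i a ^ 2) := integral_abs_sum_comp_sub_le hv hindep h
    _ ≤ √(∑ _i ∈ s, M ^ 2) := Real.sqrt_le_sqrt (sum_le_sum fun i _ => hsecond i)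
    _ = M * √(#s) := by
        rw [sum_const, nsmul_eq_mul, Real.sqrt_mul (Nat.cast_nonneg _), Real.sqrt_sq hM, mul_comm]

theorem integrable_abs_sum_comp {ι : Type*} {v : ι → Ω → U} (hv : ∀ i, Measurable (v i))
    (s : Finset ι) (h : ι → U → ℝ) : Integrable (fun ω => |∑ i ∈ s, h i (v i ω)|) P :=
  (integrable_finsetSum s fun i _ => Integrable.of_finite.comp_measurable (hv i)).abs

variable [DecidableEq U] {κ : Type*} [Fintype κ] {N : κ → ℕ} {Npop : ℝ}

theorem integral_abs_meanField_error_le [Nonempty U] (hNpop : Npop = ∑ k, (N k : ℝ))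
    (hpos : 0 < Npop)
    {u : (k : κ) → Fin (N k) → Ω → U} (hu : ∀ k j, Measurable (u k j))
    (hindep : iIndepFun (fun p : Σ k, Fin (N k) => u p.1 p.2) P) {M L : ℝ} (hM : 0 ≤ M)
    (hL : 0 ≤ L) {f : (k : κ) → Fin (N k) → U → (U × κ → ℝ) → ℝ}
    (hfBdd : ∀ k j a ν, IsProb ν → |f k j a ν| ≤ M)
    (hfLip : ∀ k j a ν₁ ν₂, IsProb ν₁ → IsProb ν₂ → |f k j a ν₁ - f k j a ν₂| ≤ L * l1 ν₁ ν₂) :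
    ∫ ω, |(1 / Npop) * ∑ k, ∑ j, f k j (u k j ω) (popAverage Npop fun k j => pointMass (u k j ω))
        - ∑ k, (∑ j, ∑ a, law P (u k j) a * f k j a (popAverage Npop fun k j => law P (u k j)))
          / Npop| ∂P
      ≤ (M + L) * √(Fintype.card U) * ((1 / Npop) * ∑ k, √(N k)) := by
  set νmf := popAverage Npop fun k j => law P (u k j)
  have hνmf : IsProb νmf := isProb_popAverage hNpop hpos fun k j => isProb_law (hu k j)
  have hpair : ∀ k, Set.Pairwise ↑(univ : Finset (Fin (N k))) fun i j => u k i ⟂ᵢ[P] u k j :=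
    fun k i _ j _ hij => hindep.indepFun (i := ⟨k, i⟩) (j := ⟨k, j⟩) (by simpa using hij)
  set E : κ → U → Ω → ℝ := fun k a ω => |∑ j, (pointMass (u k j ω) a - law P (u k j) a)|
  set D : κ → Ω → ℝ := fun k ω =>
    |∑ j, (f k j (u k j ω) νmf - ∑ a, law P (u k j) a * f k j a νmf)|
  have hE : ∀ k a, Integrable (E k a) P := fun k a =>
    integrable_abs_sum_comp (hu k) univ fun j b => pointMass b a - law P (u k j) a
  have hD : ∀ k, Integrable (D k) P := fun k =>
    integrable_abs_sum_comp (hu k) univ fun j b =>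
      f k j b νmf - ∑ a, law P (u k j) a * f k j a νmf
  have hB : ∀ k, Integrable (fun ω => L * ∑ a, E k a ω + D k ω) P := fun k =>
    ((integrable_finsetSum _ fun a _ => hE k a).const_mul L).add (hD k)
  have hU : 1 ≤ √(Fintype.card U) := Real.one_le_sqrt.2 (by exact_mod_cast Fintype.card_pos)
  calc _ ≤ ∫ ω, (∑ k, (L * ∑ a, E k a ω + D k ω)) / Npop ∂P :=
        integral_mono_of_nonneg (.of_forall fun _ => abs_nonneg _)
          ((integrable_finsetSum _ fun k _ => hB k).div_const _)
          (.of_forall fun ω => abs_meanField_error_le hNpop hpos (fun k j => isProb_law (hu k j))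
            hfLip fun k j => u k j ω)
    _ = (∑ k, (L * ∑ a, ∫ ω, E k a ω ∂P + ∫ ω, D k ω ∂P)) / Npop := by
        rw [integral_div, integral_finsetSum _ fun k _ => hB k]
        congr 1
        refine sum_congr rfl fun k _ => ?_
        rw [integral_add ((integrable_finsetSum _ fun a _ => hE k a).const_mul L) (hD k),
          integral_const_mul, integral_finsetSum _ fun a _ => hE k a]
    _ ≤ (∑ k, (L * (√(Fintype.card U) * √(N k)) + M * √(N k))) / Npop := by
        gcongr with k
        · exact (sum_integral_abs_sum_pointMass_sub_le (hu k) (hpair k)).trans_eq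
            (by rw [card_univ, Fintype.card_fin])
        · exact (integral_abs_sum_comp_sub_le_of_abs_le (hu k) (hpair k) hM
            fun j a => hfBdd k j a νmf hνmf).trans_eq (by rw [card_univ, Fintype.card_fin])
    _ ≤ (∑ k, (M + L) * √(Fintype.card U) * √(N k)) / Npop := by
        gcongr with k
        nlinarith [mul_nonneg (mul_nonneg hM (Real.sqrt_nonneg (N k))) (sub_nonneg.2 hU)]
    _ = (M + L) * √(Fintype.card U) * ((1 / Npop) * ∑ k, √(N k)) := by
        rw [← mul_sum]
        ring

end Concentration

theorem stmt7_general {Ω : Type*} [MeasurableSpace Ω] (P : Measure Ω) [IsProbabilityMeasure P]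
    {X U : Type*} [Fintype X] [Fintype U] [Nonempty U]
    [DecidableEq X] [DecidableEq U]
    [MeasurableSpace U] [MeasurableSingletonClass U]
    (K : ℕ) (hK : 0 < K) (N : Fin K → ℕ) (hN : ∀ k, 0 < N k)
    (Npop : ℝ) (hNpop : Npop = ∑ k, (N k : ℝ))
    (MR LR : ℝ) (hMR : 0 ≤ MR) (hLR : 0 ≤ LR)
    -- fixed states and their empirical joint distribution
    (x : (k : Fin K) → Fin (N k) → X)
    (μN : X × Fin K → ℝ)
    (hμN : ∀ x0 k, μN (x0, k) = (∑ j, if x k j = x0 then (1 : ℝ) else 0) / Npop)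
    -- decision rules
    (pi : Fin K → X → (X × Fin K → ℝ) → U → ℝ)
    -- the random actions: independent, with law `pi k (x k j) μN`
    (u : (k : Fin K) → Fin (N k) → Ω → U)
    (hmeas : ∀ k j, Measurable (u k j))
    (hulaw : ∀ k j u0, (P {ω | u k j ω = u0}).toReal = pi k (x k j) μN u0)
    (hindep : iIndepFun
      (fun p : Σ k : Fin K, Fin (N k) => u p.1 p.2) P)
    -- reward functions
    (r : Fin K → X → U → (X × Fin K → ℝ) → (U × Fin K → ℝ) → ℝ)
    (hrBdd : ∀ k x0 u0 μ ν, IsProb μ → IsProb ν → |r k x0 u0 μ ν| ≤ MR)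
    (hrLip : ∀ k x0 u0 μ ν₁ ν₂, IsProb μ → IsProb ν₁ → IsProb ν₂ →
      |r k x0 u0 μ ν₁ - r k x0 u0 μ ν₂| ≤ LR * l1 ν₁ ν₂)
    -- random empirical action distribution
    (νN : Ω → U × Fin K → ℝ)
    (hνN : ∀ ω u0 k, νN ω (u0, k) = (∑ j, if u k j ω = u0 then (1 : ℝ) else 0) / Npop)
    -- mean-field action distribution and reward
    (νMF : U × Fin K → ℝ)
    (hνMF : ∀ u0 k, νMF (u0, k) = ∑ x0, pi k x0 μN u0 * μN (x0, k))
    (rMF : Fin K → ℝ)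
    (hrMF : ∀ k, rMF k = ∑ x0, ∑ u0, μN (x0, k) * pi k x0 μN u0 * r k x0 u0 μN νMF) :
    ∫ ω, |(1 / Npop) * ∑ k, ∑ j, r k (x k j) (u k j ω) μN (νN ω) - ∑ k, rMF k| ∂P
      ≤ (MR + LR) * Real.sqrt (Fintype.card U) * ((1 / Npop) * ∑ k, Real.sqrt (N k)) := by
  have hpos : 0 < Npop := hNpop ▸ sum_pos (fun k _ => Nat.cast_pos.2 (hN k)) ⟨⟨0, hK⟩, mem_univ _⟩
  have hμN' : μN = popAverage Npop fun k j => pointMass (x k j) := funext fun q => hμN q.1 q.2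
  have hμNprob : IsProb μN :=
    hμN' ▸ isProb_popAverage hNpop hpos fun k j => isProb_pointMass (x k j)
  have hmean : ∀ k (φ : X → ℝ), ∑ x0, φ x0 * μN (x0, k) = (∑ j, φ (x k j)) / Npop := fun k φ =>
    hμN' ▸ sum_mul_popAverage_pointMass x φ k
  have hlaw : ∀ k j, law P (u k j) = pi k (x k j) μN := fun k j => funext (hulaw k j)
  obtain rfl : νN = fun ω => popAverage Npop fun k j => pointMass (u k j ω) :=
    funext fun ω => funext fun q => hνN ω q.1 q.2
  obtain rfl : νMF = popAverage Npop fun k j => law P (u k j) := funext fun ⟨a, k⟩ => by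
    rw [hνMF, hmean, popAverage_apply]
    simp only [← hlaw]
  obtain rfl : rMF = fun k => (∑ j, ∑ a, law P (u k j) a * r k (x k j) a μN
      (popAverage Npop fun k j => law P (u k j))) / Npop := funext fun k => by
    simp_rw [hrMF, mul_assoc, ← mul_sum, mul_comm (μN _), hmean, ← hlaw]
  exact integral_abs_meanField_error_le (f := fun k j a ν => r k (x k j) a μN ν) hNpop hpos hmeas
    hindep hMR hLR
    (fun k j a ν hν => hrBdd k (x k j) a μN ν hμNprob hν)
    (fun k j a ν₁ ν₂ h₁ h₂ => hrLip k (x k j) a μN ν₁ ν₂ hμNprob h₁ h₂)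

theorem stmt7 {Ω : Type*} [MeasurableSpace Ω] (P : Measure Ω) [IsProbabilityMeasure P]
    {X U : Type*} [Fintype X] [Fintype U] [Nonempty X] [Nonempty U]
    [DecidableEq X] [DecidableEq U]
    [MeasurableSpace U] [MeasurableSingletonClass U]
    (K : ℕ) (hK : 0 < K) (N : Fin K → ℕ) (hN : ∀ k, 0 < N k)
    (Npop : ℝ) (hNpop : Npop = ∑ k, (N k : ℝ))
    (MR LR : ℝ) (hMR : 0 ≤ MR) (hLR : 0 ≤ LR)
    -- fixed states and their empirical joint distribution
    (x : (k : Fin K) → Fin (N k) → X)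
    (μN : X × Fin K → ℝ)
    (hμN : ∀ x0 k, μN (x0, k) = (∑ j, if x k j = x0 then (1 : ℝ) else 0) / Npop)
    -- decision rules
    (pi : Fin K → X → (X × Fin K → ℝ) → U → ℝ)
    (hpiProb : ∀ k x0 μ, IsProb μ → IsProb (pi k x0 μ))
    -- the random actions: independent, with law `pi k (x k j) μN`
    (u : (k : Fin K) → Fin (N k) → Ω → U)
    (hmeas : ∀ k j, Measurable (u k j))
    (hulaw : ∀ k j u0, (P {ω | u k j ω = u0}).toReal = pi k (x k j) μN u0)
    (hindep : iIndepFun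
      (fun p : Σ k : Fin K, Fin (N k) => u p.1 p.2) P)
    -- reward functions
    (r : Fin K → X → U → (X × Fin K → ℝ) → (U × Fin K → ℝ) → ℝ)
    (hrBdd : ∀ k x0 u0 μ ν, IsProb μ → IsProb ν → |r k x0 u0 μ ν| ≤ MR)
    (hrLip : ∀ k x0 u0 μ ν₁ ν₂, IsProb μ → IsProb ν₁ → IsProb ν₂ →
      |r k x0 u0 μ ν₁ - r k x0 u0 μ ν₂| ≤ LR * l1 ν₁ ν₂)
    -- random empirical action distribution
    (νN : Ω → U × Fin K → ℝ)
    (hνN : ∀ ω u0 k, νN ω (u0, k) = (∑ j, if u k j ω = u0 then (1 : ℝ) else 0) / Npop)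
    -- mean-field action distribution and reward
    (νMF : U × Fin K → ℝ)
    (hνMF : ∀ u0 k, νMF (u0, k) = ∑ x0, pi k x0 μN u0 * μN (x0, k))
    (rMF : Fin K → ℝ)
    (hrMF : ∀ k, rMF k = ∑ x0, ∑ u0, μN (x0, k) * pi k x0 μN u0 * r k x0 u0 μN νMF) :
    ∫ ω, |(1 / Npop) * ∑ k, ∑ j, r k (x k j) (u k j ω) μN (νN ω) - ∑ k, rMF k| ∂P
      ≤ (MR + LR) * Real.sqrt (Fintype.card U) * ((1 / Npop) * ∑ k, Real.sqrt (N k)) :=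
  stmt7_general P K hK N hN Npop hNpop MR LR hMR hLR x μN hμN pi u hmeas hulaw hindep r hrBdd hrLip
    νN hνN νMF hνMF rMF hrMF
end

section
/- Let X and U be finite nonempty sets, K a positive integer, and L̄_Q ≥ 0. Let π̄ = (π̄_k)_{k∈[K]} be decision rules π̄_k : X × P(X)^K → P(U) such that for all x ∈ X, k ∈ [K], and μ̄₁, μ̄₂ ∈ P(X)^K, |π̄_k(x,μ̄₁) − π̄_k(x,μ̄₂)|₁ ≤ L̄_Q·|μ̄₁ − μ̄₂|₁, where |μ̄₁ − μ̄₂|₁ = Σ_{k∈[K]} Σ_{x∈X} |μ̄₁(x,k) − μ̄₂(x,k)|. Define ν̄^MF(μ̄,π̄) ∈ P(U)^K by ν̄^MF(μ̄,π̄)(u,k) = Σ_{x∈X} π̄_k(x,μ̄)(u)·μ̄(x,k). Then for all μ̄, μ̄' ∈ P(X)^K, |ν̄^MF(μ̄,π̄) − ν̄^MF(μ̄',π̄)|₁ ≤ (1 + K·L̄_Q)·|μ̄ − μ̄'|₁. -/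
/-! Class by class, `π(x,μ) μ - π(x,μ') μ' = π(x,μ) (μ - μ') + (π(x,μ) - π(x,μ')) μ'`.
Since each `π(x,μ)` sums to one, the first part contributes exactly `|μ(·,k) - μ'(·,k)|₁`;
since `μ'(·,k)` is a probability, the second is an average of the Lipschitz bounds, at most
`L̄_Q |μ - μ'|₁`. Summing over the `K` classes gives `(1 + K L̄_Q) |μ - μ'|₁`. -/

open Finset

/-- An element of `P(A)^K`: for each class `k`, the slice `μ (·, k)` is a
probability distribution on `A`. -/
def IsProbK {A : Type*} [Fintype A] {K : ℕ} (μ : A × Fin K → ℝ) : Prop :=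
  ∀ k, IsProb (fun a => μ (a, k))

theorem l1_prod_eq_sum {A B : Type*} [Fintype A] [Fintype B] (μ ν : A × B → ℝ) :
    l1 μ ν = ∑ b, l1 (fun a => μ (a, b)) (fun a => ν (a, b)) := by
  rw [l1, Fintype.sum_prod_type, sum_comm]
  rfl

theorem sum_mul_le_of_isProb {A : Type*} [Fintype A] {f q : A → ℝ} {c : ℝ}
    (hq : IsProb q) (hf : ∀ a, f a ≤ c) : ∑ a, f a * q a ≤ c :=
  calc ∑ a, f a * q a ≤ ∑ a, c * q a :=
        sum_le_sum fun a _ => mul_le_mul_of_nonneg_right (hf a) (hq.1 a)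
    _ = c := by rw [← mul_sum, hq.2, mul_one]

theorem l1_sum_mul_le {X U : Type*} [Fintype X] [Fintype U] {P Q : X → U → ℝ} {p q : X → ℝ}
    (hP : ∀ x, IsProb (P x)) (hq : ∀ x, 0 ≤ q x) :
    l1 (fun u => ∑ x, P x u * p x) (fun u => ∑ x, Q x u * q x)
      ≤ l1 p q + ∑ x, l1 (P x) (Q x) * q x := by
  have pointwise : ∀ u x, |P x u * p x - Q x u * q x|
      ≤ P x u * |p x - q x| + |P x u - Q x u| * q x := fun u x => by
    have hsplit : P x u * p x - Q x u * q x = P x u * (p x - q x) + (P x u - Q x u) * q x := by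
      ring
    rw [hsplit]
    refine (abs_add_le _ _).trans_eq ?_
    rw [abs_mul, abs_mul, abs_of_nonneg ((hP x).1 u), abs_of_nonneg (hq x)]
  calc l1 (fun u => ∑ x, P x u * p x) (fun u => ∑ x, Q x u * q x)
      ≤ ∑ u, ∑ x, (P x u * |p x - q x| + |P x u - Q x u| * q x) :=
        sum_le_sum fun u _ => by
          rw [← sum_sub_distrib]
          exact (abs_sum_le_sum_abs _ _).trans (sum_le_sum fun x _ => pointwise u x)
    _ = ∑ x, ((∑ u, P x u) * |p x - q x| + l1 (P x) (Q x) * q x) := by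
        rw [sum_comm]
        simp only [l1, sum_add_distrib, sum_mul]
    _ = l1 p q + ∑ x, l1 (P x) (Q x) * q x := by
        simp only [fun x => (hP x).2, one_mul, sum_add_distrib, l1]

theorem stmt12_general
    {X U : Type*} [Fintype X] [Fintype U]
    (K : ℕ) (LQ : ℝ)
    (pi : Fin K → X → (X × Fin K → ℝ) → U → ℝ)
    (hpiProb : ∀ k x μ, IsProbK μ → IsProb (pi k x μ))
    (hpiLip : ∀ k x μ₁ μ₂, IsProbK μ₁ → IsProbK μ₂ →
      l1 (pi k x μ₁) (pi k x μ₂) ≤ LQ * l1 μ₁ μ₂)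
    (nuMF : (X × Fin K → ℝ) → U × Fin K → ℝ)
    (hnuMF : ∀ μ u k, nuMF μ (u, k) = ∑ x, pi k x μ u * μ (x, k))
    (μ μ' : X × Fin K → ℝ) (hμ : IsProbK μ) (hμ' : IsProbK μ') :
    l1 (nuMF μ) (nuMF μ') ≤ (1 + (K : ℝ) * LQ) * l1 μ μ' := by
  calc l1 (nuMF μ) (nuMF μ')
      = ∑ k, l1 (fun u => ∑ x, pi k x μ u * μ (x, k))
          (fun u => ∑ x, pi k x μ' u * μ' (x, k)) := by
        simp only [l1_prod_eq_sum, hnuMF]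
    _ ≤ ∑ k : Fin K, (l1 (fun x => μ (x, k)) (fun x => μ' (x, k)) + LQ * l1 μ μ') :=
        sum_le_sum fun k _ =>
          (l1_sum_mul_le (fun x => hpiProb k x μ hμ) (hμ' k).1).trans <|
            add_le_add_right (sum_mul_le_of_isProb (hμ' k) fun x => hpiLip k x μ μ' hμ hμ') _
    _ = (1 + (K : ℝ) * LQ) * l1 μ μ' := by
        rw [sum_add_distrib, ← l1_prod_eq_sum, sum_const, card_univ, Fintype.card_fin,
          nsmul_eq_mul]
        ring

theorem stmt12
    {X U : Type*} [Fintype X] [Fintype U] [Nonempty X] [Nonempty U]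
    (K : ℕ) (hK : 0 < K) (LQ : ℝ) (hLQ : 0 ≤ LQ)
    (pi : Fin K → X → (X × Fin K → ℝ) → U → ℝ)
    (hpiProb : ∀ k x μ, IsProbK μ → IsProb (pi k x μ))
    (hpiLip : ∀ k x μ₁ μ₂, IsProbK μ₁ → IsProbK μ₂ →
      l1 (pi k x μ₁) (pi k x μ₂) ≤ LQ * l1 μ₁ μ₂)
    (nuMF : (X × Fin K → ℝ) → U × Fin K → ℝ)
    (hnuMF : ∀ μ u k, nuMF μ (u, k) = ∑ x, pi k x μ u * μ (x, k))
    (μ μ' : X × Fin K → ℝ) (hμ : IsProbK μ) (hμ' : IsProbK μ') :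
    l1 (nuMF μ) (nuMF μ') ≤ (1 + (K : ℝ) * LQ) * l1 μ μ' :=
  stmt12_general K LQ pi hpiProb hpiLip nuMF hnuMF μ μ' hμ hμ'
end

section
/- Let X and U be finite nonempty sets, K a positive integer, and M_R, L_R, L_Q ≥ 0. Let π = (π_k)_{k∈[K]} be decision rules π_k : X × P(X) → P(U) with |π_k(x,m₁) − π_k(x,m₂)|₁ ≤ L_Q·|m₁ − m₂|₁ for all arguments. Let r_k : X × U × P(X) × P(U) → ℝ satisfy |r_k(x,u,m,n)| ≤ M_R and |r_k(x,u,m₁,n₁) − r_k(x,u,m₂,n₂)| ≤ L_R·(|m₁ − m₂|₁ + |n₁ − n₂|₁). For μ ∈ P(X×[K]) with marginal μ[X], define ν^MF(μ,π)(u,k) = Σ_x π_k(x,μ[X])(u)·μ(x,k), its U-marginal ν^MF(μ,π)[U], and r_k^MF(μ,π) = Σ_{x,u} μ(x,k)·π_k(x,μ[X])(u)·r_k(x,u,μ[X],ν^MF(μ,π)[U]). Then for all μ, μ' ∈ P(X×[K]), Σ_{k∈[K]} |r_k^MF(μ,π) − r_k^MF(μ',π)| ≤ S_R'·|μ − μ'|₁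 + S_R''·|μ[X] − μ'[X]|₁, where S_R' = M_R + L_R and S_R'' = M_R·L_Q + L_R·(1+L_Q). -/
open Finset

/-- The marginal on `A` of a distribution on `A × Fin K`. -/
def marg {A : Type*} [Fintype A] {K : ℕ} (μ : A × Fin K → ℝ) : A → ℝ :=
  fun a => ∑ k, μ (a, k)

/-!
Both mean-field quantities are mixtures `∑ᵢ wᵢ Pᵢ(u)` of probability kernels, so their
differences split as `Pᵢ (wᵢ - w'ᵢ) + w'ᵢ (Pᵢ - P'ᵢ)`: the first part costs `|μ - μ'|₁`, the
second the Lipschitz constant of the kernel times `|μ[X] - μ'[X]|₁`. For the rewards one more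
term `w'ᵢ P'ᵢ (r - r')` appears, controlled by the Lipschitz bound on `r` through
`|μ[X] - μ'[X]|₁` and `|ν[U] - ν'[U]|₁ ≤ |μ - μ'|₁ + L_Q |μ[X] - μ'[X]|₁`.
-/

section Mixture

variable {ι A B U : Type*} [Fintype ι] [Fintype A] [Fintype B] [Fintype U]

lemma IsProb.marg {K : ℕ} {μ : A × Fin K → ℝ} (h : IsProb μ) : IsProb (marg μ) :=
  ⟨fun _ => sum_nonneg fun _ _ => h.1 _, by rw [← h.2, Fintype.sum_prod_type]; rfl⟩

lemma IsProb.mixture {w : ι → ℝ} {P : ι → U → ℝ} (hw : IsProb w) (hP : ∀ i, IsProb (P i)) :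
    IsProb fun u => ∑ i, P i u * w i := by
  refine ⟨fun u => sum_nonneg fun i _ => mul_nonneg ((hP i).1 u) (hw.1 i), ?_⟩
  rw [sum_comm, ← hw.2]
  exact sum_congr rfl fun i _ => by rw [← sum_mul, (hP i).2, one_mul]

lemma sum_abs_sum_le_sum_abs_prod (f : A → B → ℝ) :
    ∑ b, |∑ a, f a b| ≤ ∑ p : A × B, |f p.1 p.2| := by
  rw [Fintype.sum_prod_type, sum_comm]
  exact sum_le_sum fun _ _ => abs_sum_le_sum_abs _ _

lemma abs_mul_sub_mul_le {p p' a a' : ℝ} (hp : 0 ≤ p) (ha' : 0 ≤ a') :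
    |p * a - p' * a'| ≤ p * |a - a'| + a' * |p - p'| :=
  calc |p * a - p' * a'| = |p * (a - a') + a' * (p - p')| := by ring_nf
    _ ≤ |p * (a - a')| + |a' * (p - p')| := abs_add_le _ _
    _ = p * |a - a'| + a' * |p - p'| := by
      rw [abs_mul, abs_mul, abs_of_nonneg hp, abs_of_nonneg ha']

variable {w w' : ι → ℝ} {P P' : ι → U → ℝ} {δ : ℝ}

lemma sum_sum_abs_mul_sub_mul_le (hw' : IsProb w') (hP : ∀ i, IsProb (P i))
    (hPP' : ∀ i, l1 (P i) (P' i) ≤ δ) :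
    ∑ i, ∑ u, |P i u * w i - P' i u * w' i| ≤ l1 w w' + δ :=
  calc ∑ i, ∑ u, |P i u * w i - P' i u * w' i|
      ≤ ∑ i, ∑ u, (P i u * |w i - w' i| + w' i * |P i u - P' i u|) :=
        sum_le_sum fun i _ => sum_le_sum fun u _ => abs_mul_sub_mul_le ((hP i).1 u) (hw'.1 i)
    _ = ∑ i, (|w i - w' i| + w' i * l1 (P i) (P' i)) := by
        refine sum_congr rfl fun i _ => ?_
        rw [sum_add_distrib, ← sum_mul, (hP i).2, one_mul, ← mul_sum, l1]
    _ ≤ ∑ i, (|w i - w' i| + w' i * δ) :=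
        sum_le_sum fun i _ => by grw [hPP' i]; exact hw'.1 i
    _ = l1 w w' + δ := by rw [sum_add_distrib, ← sum_mul, hw'.2, one_mul, l1]

lemma l1_mixture_le (hw' : IsProb w') (hP : ∀ i, IsProb (P i))
    (hPP' : ∀ i, l1 (P i) (P' i) ≤ δ) :
    l1 (fun u => ∑ i, P i u * w i) (fun u => ∑ i, P' i u * w' i) ≤ l1 w w' + δ :=
  calc l1 (fun u => ∑ i, P i u * w i) (fun u => ∑ i, P' i u * w' i)
      ≤ ∑ u, ∑ i, |P i u * w i - P' i u * w' i| := by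
        refine sum_le_sum fun u _ => ?_
        rw [← sum_sub_distrib]
        exact abs_sum_le_sum_abs _ _
    _ ≤ l1 w w' + δ := sum_comm.trans_le (sum_sum_abs_mul_sub_mul_le hw' hP hPP')

lemma sum_sum_abs_weighted_sub_le {R R' : ι → U → ℝ} {M ε : ℝ} (hM : 0 ≤ M)
    (hw' : IsProb w') (hP : ∀ i, IsProb (P i)) (hP' : ∀ i, IsProb (P' i))
    (hPP' : ∀ i, l1 (P i) (P' i) ≤ δ) (hR : ∀ i u, |R i u| ≤ M)
    (hRR' : ∀ i u, |R i u - R' i u| ≤ ε) :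
    ∑ i, ∑ u, |w i * P i u * R i u - w' i * P' i u * R' i u| ≤ M * (l1 w w' + δ) + ε := by
  have hterm : ∀ i u, |w i * P i u * R i u - w' i * P' i u * R' i u|
      ≤ M * |P i u * w i - P' i u * w' i| + ε * (P' i u * w' i) := fun i u => by
    have hPw' : 0 ≤ P' i u * w' i := mul_nonneg ((hP' i).1 u) (hw'.1 i)
    calc |w i * P i u * R i u - w' i * P' i u * R' i u|
        = |(P i u * w i - P' i u * w' i) * R i u + (P' i u * w' i) * (R i u - R' i u)| := by
          ring_nf
      _ ≤ |P i u * w i - P' i u * w' i| * |R i u| + (P' i u * w' i) * |R i u - R' i u| := by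
          grw [abs_add_le, abs_mul, abs_mul, abs_of_nonneg hPw']
      _ ≤ M * |P i u * w i - P' i u * w' i| + ε * (P' i u * w' i) := by
          rw [mul_comm M, mul_comm ε]
          gcongr
          exacts [hR i u, hRR' i u]
  have hmass : ∑ i, ∑ u, P' i u * w' i = 1 := (IsProb.mixture hw' hP').2 ▸ sum_comm
  calc ∑ i, ∑ u, |w i * P i u * R i u - w' i * P' i u * R' i u|
      ≤ ∑ i, ∑ u, (M * |P i u * w i - P' i u * w' i| + ε * (P' i u * w' i)) :=
        sum_le_sum fun i _ => sum_le_sum fun u _ => hterm i u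
    _ = M * ∑ i, ∑ u, |P i u * w i - P' i u * w' i| + ε := by
        simp only [sum_add_distrib, ← mul_sum, hmass, mul_one]
    _ ≤ M * (l1 w w' + δ) + ε := by grw [sum_sum_abs_mul_sub_mul_le hw' hP hPP']

end Mixture

theorem stmt16_general
    {X U : Type*} [Fintype X] [Fintype U]
    (K : ℕ)
    (MR LR LQ : ℝ) (hMR : 0 ≤ MR) (hLR : 0 ≤ LR)
    (pi : Fin K → X → (X → ℝ) → U → ℝ)
    (hpiProb : ∀ k x m, IsProb m → IsProb (pi k x m))
    (hpiLip : ∀ k x m₁ m₂, IsProb m₁ → IsProb m₂ →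
      l1 (pi k x m₁) (pi k x m₂) ≤ LQ * l1 m₁ m₂)
    (r : Fin K → X → U → (X → ℝ) → (U → ℝ) → ℝ)
    (hrBdd : ∀ k x u m n, IsProb m → IsProb n → |r k x u m n| ≤ MR)
    (hrLip : ∀ k x u m₁ n₁ m₂ n₂, IsProb m₁ → IsProb n₁ → IsProb m₂ → IsProb n₂ →
      |r k x u m₁ n₁ - r k x u m₂ n₂| ≤ LR * (l1 m₁ m₂ + l1 n₁ n₂))
    (nuMF : (X × Fin K → ℝ) → U × Fin K → ℝ)
    (hnuMF : ∀ μ u k, nuMF μ (u, k) = ∑ x, pi k x (marg μ) u * μ (x, k))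
    (rMF : (X × Fin K → ℝ) → Fin K → ℝ)
    (hrMF : ∀ μ k, rMF μ k =
      ∑ x, ∑ u, μ (x, k) * pi k x (marg μ) u * r k x u (marg μ) (marg (nuMF μ)))
    (μ μ' : X × Fin K → ℝ) (hμ : IsProb μ) (hμ' : IsProb μ') :
    ∑ k, |rMF μ k - rMF μ' k|
      ≤ (MR + LR) * l1 μ μ' + (MR * LQ + LR * (1 + LQ)) * l1 (marg μ) (marg μ') := by
  have hm := hμ.marg
  have hm' := hμ'.marg
  have hmarg_nuMF : ∀ σ, marg (nuMF σ) = fun u => ∑ i : X × Fin K, pi i.2 i.1 (marg σ) u * σ i :=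
    fun σ => funext fun u => by simp only [marg, hnuMF, Fintype.sum_prod_type]; exact sum_comm
  have hn : IsProb (marg (nuMF μ)) := hmarg_nuMF μ ▸ hμ.mixture fun _ => hpiProb _ _ _ hm
  have hn' : IsProb (marg (nuMF μ')) := hmarg_nuMF μ' ▸ hμ'.mixture fun _ => hpiProb _ _ _ hm'
  have hkernel : ∀ i : X × Fin K, l1 (pi i.2 i.1 (marg μ)) (pi i.2 i.1 (marg μ'))
      ≤ LQ * l1 (marg μ) (marg μ') := fun i => hpiLip _ _ _ _ hm hm'
  have hnu : l1 (marg (nuMF μ)) (marg (nuMF μ')) ≤ l1 μ μ' + LQ * l1 (marg μ) (marg μ') := by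
    rw [hmarg_nuMF, hmarg_nuMF]
    exact l1_mixture_le hμ' (fun _ => hpiProb _ _ _ hm) hkernel
  calc ∑ k, |rMF μ k - rMF μ' k|
      ≤ ∑ i : X × Fin K, ∑ u,
          |μ i * pi i.2 i.1 (marg μ) u * r i.2 i.1 u (marg μ) (marg (nuMF μ))
            - μ' i * pi i.2 i.1 (marg μ') u * r i.2 i.1 u (marg μ') (marg (nuMF μ'))| := by
        simp only [hrMF, ← sum_sub_distrib]
        exact (sum_abs_sum_le_sum_abs_prod _).trans
          (sum_le_sum fun _ _ => abs_sum_le_sum_abs _ _)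
    _ ≤ MR * (l1 μ μ' + LQ * l1 (marg μ) (marg μ'))
          + LR * (l1 (marg μ) (marg μ') + l1 (marg (nuMF μ)) (marg (nuMF μ'))) :=
        sum_sum_abs_weighted_sub_le hMR hμ' (fun _ => hpiProb _ _ _ hm)
          (fun _ => hpiProb _ _ _ hm') hkernel (fun _ _ => hrBdd _ _ _ _ _ hm hn)
          (fun _ _ => hrLip _ _ _ _ _ _ _ hm hn hm' hn')
    _ ≤ (MR + LR) * l1 μ μ' + (MR * LQ + LR * (1 + LQ)) * l1 (marg μ) (marg μ') := by
        linarith [mul_le_mul_of_nonneg_left hnu hLR]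

theorem stmt16
    {X U : Type*} [Fintype X] [Fintype U] [Nonempty X] [Nonempty U]
    (K : ℕ) (hK : 0 < K)
    (MR LR LQ : ℝ) (hMR : 0 ≤ MR) (hLR : 0 ≤ LR) (hLQ : 0 ≤ LQ)
    (pi : Fin K → X → (X → ℝ) → U → ℝ)
    (hpiProb : ∀ k x m, IsProb m → IsProb (pi k x m))
    (hpiLip : ∀ k x m₁ m₂, IsProb m₁ → IsProb m₂ →
      l1 (pi k x m₁) (pi k x m₂) ≤ LQ * l1 m₁ m₂)
    (r : Fin K → X → U → (X → ℝ) → (U → ℝ) → ℝ)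
    (hrBdd : ∀ k x u m n, IsProb m → IsProb n → |r k x u m n| ≤ MR)
    (hrLip : ∀ k x u m₁ n₁ m₂ n₂, IsProb m₁ → IsProb n₁ → IsProb m₂ → IsProb n₂ →
      |r k x u m₁ n₁ - r k x u m₂ n₂| ≤ LR * (l1 m₁ m₂ + l1 n₁ n₂))
    (nuMF : (X × Fin K → ℝ) → U × Fin K → ℝ)
    (hnuMF : ∀ μ u k, nuMF μ (u, k) = ∑ x, pi k x (marg μ) u * μ (x, k))
    (rMF : (X × Fin K → ℝ) → Fin K → ℝ)
    (hrMF : ∀ μ k, rMF μ k =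
      ∑ x, ∑ u, μ (x, k) * pi k x (marg μ) u * r k x u (marg μ) (marg (nuMF μ)))
    (μ μ' : X × Fin K → ℝ) (hμ : IsProb μ) (hμ' : IsProb μ') :
    ∑ k, |rMF μ k - rMF μ' k|
      ≤ (MR + LR) * l1 μ μ' + (MR * LQ + LR * (1 + LQ)) * l1 (marg μ) (marg μ') :=
  stmt16_general K MR LR LQ hMR hLR pi hpiProb hpiLip r hrBdd hrLip nuMF hnuMF rMF hrMF μ μ' hμ hμ'
end

section
/- Let X and U be finite nonempty sets, K a positive integer, and L_P, L_Q ≥ 0. Let π = (π_k)_{k∈[K]} be decision rules π_k : X × P(X) → P(U) with |π_k(x,m₁) − π_k(x,m₂)|₁ ≤ L_Q·|m₁ − m₂|₁ for all arguments. Let P_k : X × U × P(X) × P(U) → P(X) satisfy |P_k(x,u,m₁,n₁) − P_k(x,u,m₂,n₂)|₁ ≤ L_P·(|m₁ − m₂|₁ + |n₁ − n₂|₁). For μ ∈ P(X×[K]) with marginal μ[X], define ν^MF(μ,π)(u,k) = Σ_x π_k(x,μ[X])(u)·μ(x,k) with U-marginal ν^MF(μ,π)[U], and P^MF(μ,π)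 ∈ P(X×[K]) by P^MF(μ,π)(x',k) = Σ_{x,u} μ(x,k)·π_k(x,μ[X])(u)·P_k(x,u,μ[X],ν^MF(μ,π)[U])(x'). Then for all μ, μ' ∈ P(X×[K]): |P^MF(μ,π)[X] − P^MF(μ',π)[X]|₁ ≤ |P^MF(μ,π) − P^MF(μ',π)|₁ ≤ S_P'·|μ − μ'|₁ + S_P''·|μ[X] − μ'[X]|₁, where S_P' = 1 + L_P and S_P'' = L_Q + L_P·(1+L_Q). -/
open Finset

/-!
In each class `k`, both `ν^MF(μ)` and `P^MF(μ)` are mixtures, with weights `μ(·, k)`, of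
probability vectors depending Lipschitz-continuously on `μ`. Since
`w q - w' q' = (w - w') q + w' (q - q')`, the L1 distance between two such mixtures is at most
`|μ - μ'|₁` plus a uniform bound on the distance between the mixed vectors. For `ν^MF` this bound
is `L_Q |μ[X] - μ'[X]|₁`. For `P^MF` the mixed vectors are themselves mixtures over actions with
weights `π_k`, so the bound is `L_Q |μ[X] - μ'[X]|₁ + L_P (|μ[X] - μ'[X]|₁ + |ν[U] - ν'[U]|₁)`,
and the estimate for `ν^MF` closes the argument.
-/

section Mixture

variable {ι A : Type*} [Fintype ι] [Fintype A]

def mix (w : ι → ℝ) (p : ι → A → ℝ) : A → ℝ :=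
  fun a => ∑ i, w i * p i a

lemma l1_sum_le (f g : ι → A → ℝ) :
    l1 (fun a => ∑ i, f i a) (fun a => ∑ i, g i a) ≤ ∑ i, l1 (f i) (g i) :=
  calc ∑ a, |∑ i, f i a - ∑ i, g i a|
      = ∑ a, |∑ i, (f i a - g i a)| := by simp only [sum_sub_distrib]
    _ ≤ ∑ a, ∑ i, |f i a - g i a| := sum_le_sum fun a _ => abs_sum_le_sum_abs _ _
    _ = ∑ i, l1 (f i) (g i) := sum_comm

lemma l1_const_mul_le {p p' : A → ℝ} (hp : IsProb p) (c : ℝ) {c' : ℝ} (hc' : 0 ≤ c') :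
    l1 (fun a => c * p a) (fun a => c' * p' a) ≤ |c - c'| + c' * l1 p p' :=
  calc ∑ a, |c * p a - c' * p' a|
      ≤ ∑ a, (|c - c'| * p a + c' * |p a - p' a|) := by
        refine sum_le_sum fun a _ => ?_
        rw [show c * p a - c' * p' a = (c - c') * p a + c' * (p a - p' a) by ring]
        refine (abs_add_le _ _).trans_eq ?_
        rw [abs_mul, abs_mul, abs_of_nonneg (hp.1 a), abs_of_nonneg hc']
    _ = |c - c'| + c' * l1 p p' := by
        rw [sum_add_distrib, ← mul_sum, ← mul_sum, hp.2, mul_one, l1]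

lemma l1_mix_le (w : ι → ℝ) {w' : ι → ℝ} (hw' : ∀ i, 0 ≤ w' i) {p p' : ι → A → ℝ}
    (hp : ∀ i, IsProb (p i)) :
    l1 (mix w p) (mix w' p') ≤ ∑ i, (|w i - w' i| + w' i * l1 (p i) (p' i)) :=
  (l1_sum_le _ _).trans (sum_le_sum fun i _ => l1_const_mul_le (hp i) _ (hw' i))

lemma sum_abs_sub_add_mul {w w' : ι → ℝ} (hw' : IsProb w') (C : ℝ) :
    ∑ i, (|w i - w' i| + w' i * C) = l1 w w' + C := by
  rw [sum_add_distrib, ← sum_mul, hw'.2, one_mul, l1]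

lemma l1_mix_le_of_le (w : ι → ℝ) {w' : ι → ℝ} (hw' : IsProb w') {p p' : ι → A → ℝ}
    (hp : ∀ i, IsProb (p i)) {C : ℝ} (hC : ∀ i, l1 (p i) (p' i) ≤ C) :
    l1 (mix w p) (mix w' p') ≤ l1 w w' + C :=
  calc l1 (mix w p) (mix w' p')
      ≤ ∑ i, (|w i - w' i| + w' i * C) :=
        (l1_mix_le w hw'.1 hp).trans
          (sum_le_sum fun i _ => by gcongr; exacts [hw'.1 i, hC i])
    _ = l1 w w' + C := sum_abs_sub_add_mul hw' C

lemma sum_mix {w : ι → ℝ} {p : ι → A → ℝ} (hp : ∀ i, ∑ a, p i a = 1) :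
    ∑ a, mix w p a = ∑ i, w i := by
  simp only [mix]
  rw [sum_comm]
  simp only [← mul_sum, hp, mul_one]

lemma isProb_mix {w : ι → ℝ} (hw : IsProb w) {p : ι → A → ℝ} (hp : ∀ i, IsProb (p i)) :
    IsProb (mix w p) :=
  ⟨fun a => sum_nonneg fun i _ => mul_nonneg (hw.1 i) ((hp i).1 a),
    (sum_mix fun i => (hp i).2).trans hw.2⟩

end Mixture

section FiberMixture

variable {A B κ : Type*} [Fintype A]

def fiberMix (w : A × κ → ℝ) (q : A × κ → B → ℝ) : B × κ → ℝ :=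
  fun x => mix (fun a => w (a, x.2)) (fun a => q (a, x.2)) x.1

lemma fiberMix_apply (w : A × κ → ℝ) (q : A × κ → B → ℝ) (b : B) (k : κ) :
    fiberMix w q (b, k) = mix (fun a => w (a, k)) (fun a => q (a, k)) b :=
  rfl

lemma l1_prod_eq_sum_fibers [Fintype B] [Fintype κ] (μ ν : B × κ → ℝ) :
    l1 μ ν = ∑ k, l1 (fun b => μ (b, k)) (fun b => ν (b, k)) :=
  Fintype.sum_prod_type_right _

lemma isProb_fiberMix [Fintype B] [Fintype κ] {w : A × κ → ℝ} (hw : IsProb w) {q : A × κ → B → ℝ}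
    (hq : ∀ i, IsProb (q i)) : IsProb (fiberMix w q) := by
  refine ⟨fun x => sum_nonneg fun a _ => mul_nonneg (hw.1 _) ((hq _).1 _), ?_⟩
  rw [Fintype.sum_prod_type_right, ← hw.2, Fintype.sum_prod_type_right]
  simp only [fiberMix_apply]
  exact sum_congr rfl fun k _ => sum_mix fun a => (hq _).2

lemma l1_fiberMix_le_of_le [Fintype B] [Fintype κ] (w : A × κ → ℝ) {w' : A × κ → ℝ} (hw' : IsProb w')
    {q q' : A × κ → B → ℝ} (hq : ∀ i, IsProb (q i)) {C : ℝ}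
    (hC : ∀ i, l1 (q i) (q' i) ≤ C) :
    l1 (fiberMix w q) (fiberMix w' q') ≤ l1 w w' + C :=
  calc l1 (fiberMix w q) (fiberMix w' q')
      ≤ ∑ k, ∑ a, (|w (a, k) - w' (a, k)| + w' (a, k) * C) := by
        simp only [l1_prod_eq_sum_fibers, fiberMix_apply]
        refine sum_le_sum fun k _ => (l1_mix_le _ (fun a => hw'.1 _) fun a => hq _).trans ?_
        exact sum_le_sum fun a _ =>
          add_le_add le_rfl (mul_le_mul_of_nonneg_left (hC _) (hw'.1 _))
    _ = l1 w w' + C :=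
        (Fintype.sum_prod_type_right _).symm.trans (sum_abs_sub_add_mul hw' C)

end FiberMixture

lemma isProb_marg {A : Type*} [Fintype A] {K : ℕ} {μ : A × Fin K → ℝ} (h : IsProb μ) :
    IsProb (marg μ) :=
  ⟨fun a => sum_nonneg fun k _ => h.1 _, by rw [← h.2, Fintype.sum_prod_type]; rfl⟩

lemma l1_marg_le {A : Type*} [Fintype A] {K : ℕ} (μ ν : A × Fin K → ℝ) :
    l1 (marg μ) (marg ν) ≤ l1 μ ν := by
  rw [l1, l1, Fintype.sum_prod_type]
  refine sum_le_sum fun a _ => ?_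
  rw [marg, marg, ← sum_sub_distrib]
  exact abs_sum_le_sum_abs _ _

theorem stmt17_general
    {X U : Type*} [Fintype X] [Fintype U]
    (K : ℕ)
    (LP LQ : ℝ) (hLP : 0 ≤ LP)
    (pi : Fin K → X → (X → ℝ) → U → ℝ)
    (hpiProb : ∀ k x m, IsProb m → IsProb (pi k x m))
    (hpiLip : ∀ k x m₁ m₂, IsProb m₁ → IsProb m₂ →
      l1 (pi k x m₁) (pi k x m₂) ≤ LQ * l1 m₁ m₂)
    (Pk : Fin K → X → U → (X → ℝ) → (U → ℝ) → X → ℝ)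
    (hPkProb : ∀ k x u m n, IsProb m → IsProb n → IsProb (Pk k x u m n))
    (hPkLip : ∀ k x u m₁ n₁ m₂ n₂, IsProb m₁ → IsProb n₁ → IsProb m₂ → IsProb n₂ →
      l1 (Pk k x u m₁ n₁) (Pk k x u m₂ n₂) ≤ LP * (l1 m₁ m₂ + l1 n₁ n₂))
    (nuMF : (X × Fin K → ℝ) → U × Fin K → ℝ)
    (hnuMF : ∀ μ u k, nuMF μ (u, k) = ∑ x, pi k x (marg μ) u * μ (x, k))
    (PMFmu : (X × Fin K → ℝ) → X × Fin K → ℝ)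
    (hPMFmu : ∀ μ x' k, PMFmu μ (x', k) =
      ∑ x, ∑ u, μ (x, k) * pi k x (marg μ) u *
        Pk k x u (marg μ) (marg (nuMF μ)) x')
    (μ μ' : X × Fin K → ℝ) (hμ : IsProb μ) (hμ' : IsProb μ') :
    l1 (marg (PMFmu μ)) (marg (PMFmu μ')) ≤ l1 (PMFmu μ) (PMFmu μ') ∧
      l1 (PMFmu μ) (PMFmu μ')
        ≤ (1 + LP) * l1 μ μ' + (LQ + LP * (1 + LQ)) * l1 (marg μ) (marg μ') := by
  have hnu_eq : ∀ σ, nuMF σ = fiberMix σ fun i => pi i.2 i.1 (marg σ) :=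
    fun σ => funext fun ⟨u, k⟩ => by simp only [hnuMF, fiberMix, mix, mul_comm]
  have hP_eq : ∀ σ, PMFmu σ = fiberMix σ fun i =>
      mix (pi i.2 i.1 (marg σ)) fun u => Pk i.2 i.1 u (marg σ) (marg (nuMF σ)) :=
    fun σ => funext fun ⟨x', k⟩ => by simp only [hPMFmu, fiberMix, mix, mul_sum, mul_assoc]
  have hm := isProb_marg hμ
  have hm' := isProb_marg hμ'
  have hn : ∀ σ, IsProb σ → IsProb (marg (nuMF σ)) := fun σ hσ =>
    isProb_marg (hnu_eq σ ▸ isProb_fiberMix hσ fun i => hpiProb _ _ _ (isProb_marg hσ))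
  have hnu_lip : l1 (marg (nuMF μ)) (marg (nuMF μ')) ≤ l1 μ μ' + LQ * l1 (marg μ) (marg μ') :=
    (l1_marg_le _ _).trans <| by
      rw [hnu_eq, hnu_eq]
      exact l1_fiberMix_le_of_le _ hμ' (fun i => hpiProb _ _ _ hm) fun i => hpiLip _ _ _ _ hm hm'
  have hP_lip : l1 (PMFmu μ) (PMFmu μ') ≤ l1 μ μ' + (LQ * l1 (marg μ) (marg μ') +
      LP * (l1 (marg μ) (marg μ') + l1 (marg (nuMF μ)) (marg (nuMF μ')))) := by
    rw [hP_eq, hP_eq]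
    refine l1_fiberMix_le_of_le _ hμ'
      (fun i => isProb_mix (hpiProb _ _ _ hm) fun u => hPkProb _ _ _ _ _ hm (hn μ hμ))
      fun i => ?_
    exact (l1_mix_le_of_le _ (hpiProb _ _ _ hm') (fun u => hPkProb _ _ _ _ _ hm (hn μ hμ))
      fun u => hPkLip _ _ _ _ _ _ _ hm (hn μ hμ) hm' (hn μ' hμ')).trans
      (add_le_add_left (hpiLip _ _ _ _ hm hm') _)
  refine ⟨l1_marg_le _ _, ?_⟩
  have := mul_le_mul_of_nonneg_left hnu_lip hLP
  linarith

theorem stmt17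
    {X U : Type*} [Fintype X] [Fintype U] [Nonempty X] [Nonempty U]
    (K : ℕ) (hK : 0 < K)
    (LP LQ : ℝ) (hLP : 0 ≤ LP) (hLQ : 0 ≤ LQ)
    (pi : Fin K → X → (X → ℝ) → U → ℝ)
    (hpiProb : ∀ k x m, IsProb m → IsProb (pi k x m))
    (hpiLip : ∀ k x m₁ m₂, IsProb m₁ → IsProb m₂ →
      l1 (pi k x m₁) (pi k x m₂) ≤ LQ * l1 m₁ m₂)
    (Pk : Fin K → X → U → (X → ℝ) → (U → ℝ) → X → ℝ)
    (hPkProb : ∀ k x u m n, IsProb m → IsProb n → IsProb (Pk k x u m n))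
    (hPkLip : ∀ k x u m₁ n₁ m₂ n₂, IsProb m₁ → IsProb n₁ → IsProb m₂ → IsProb n₂ →
      l1 (Pk k x u m₁ n₁) (Pk k x u m₂ n₂) ≤ LP * (l1 m₁ m₂ + l1 n₁ n₂))
    (nuMF : (X × Fin K → ℝ) → U × Fin K → ℝ)
    (hnuMF : ∀ μ u k, nuMF μ (u, k) = ∑ x, pi k x (marg μ) u * μ (x, k))
    (PMFmu : (X × Fin K → ℝ) → X × Fin K → ℝ)
    (hPMFmu : ∀ μ x' k, PMFmu μ (x', k) =
      ∑ x, ∑ u, μ (x, k) * pi k x (marg μ) u *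
        Pk k x u (marg μ) (marg (nuMF μ)) x')
    (μ μ' : X × Fin K → ℝ) (hμ : IsProb μ) (hμ' : IsProb μ') :
    l1 (marg (PMFmu μ)) (marg (PMFmu μ')) ≤ l1 (PMFmu μ) (PMFmu μ') ∧
      l1 (PMFmu μ) (PMFmu μ')
        ≤ (1 + LP) * l1 μ μ' + (LQ + LP * (1 + LQ)) * l1 (marg μ) (marg μ') :=
  stmt17_general K LP LQ hLP pi hpiProb hpiLip Pk hPkProb hPkLip nuMF hnuMF PMFmu hPMFmu μ μ' hμ hμ'
end
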